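/- Under arbitrary dependence with common AGG(ν) marginals, the positive part of the normalized excess of the maximum vanishes in expectation: E[(M_p/u_p − (1 + c_p))₊] → 0 as p → ∞, where M_p = max_{1≤j≤p} ε_p(j), u_p = F⁻¹(1 − 1/p), and c_p = u_{p log p}/u_p − 1. -/

import Mathlib

open Filter MeasureTheory
open scoped ENNReal NNReal

/-- The generalized (left-continuous) inverse of a CDF: F⁻¹(u) = inf {x : F(x) ≥ u}. -/
noncomputable def genInv (F : ℝ → ℝ) (u : ℝ) : ℝ := sInf {x : ℝ | u ≤ F x}

/-- The (1 − 1/q)-quantile of F. -/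
noncomputable def quantileSeq (F : ℝ → ℝ) (q : ℝ) : ℝ := genInv F (1 - 1 / q)

/-- The AGG(ν) tail condition: log F̄(x) ~ −x^ν/ν as x → ∞. -/
def AGGTail (F : ℝ → ℝ) (ν : ℝ) : Prop :=
  ∀ ε > (0:ℝ), ∃ C : ℝ, ∀ x ≥ C,
    -(1 + ε) * x ^ ν / ν ≤ Real.log (1 - F x) ∧
    Real.log (1 - F x) ≤ -(1 - ε) * x ^ ν / ν

section helpers

variable {F : ℝ → ℝ} {ν : ℝ}

lemma F_nonneg (hmono : Monotone F) (h0 : Tendsto F atBot (nhds 0)) (x : ℝ) : 0 ≤ F x := by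
  have h : ∀ᶠ y in atBot, F y ≤ F x := by
    filter_upwards [eventually_le_atBot x] with y hy using hmono hy
  exact le_of_tendsto h0 h

lemma F_le_one (hmono : Monotone F) (h1 : Tendsto F atTop (nhds 1)) (x : ℝ) : F x ≤ 1 := by
  have h : ∀ᶠ y in atTop, F x ≤ F y := by
    filter_upwards [eventually_ge_atTop x] with y hy using hmono hy
  exact ge_of_tendsto h1 h

lemma genInv_bddBelow (h0 : Tendsto F atBot (nhds 0)) (hmono : Monotone F) {u : ℝ}
    (hu : 0 < u) : BddBelow {x : ℝ | u ≤ F x} := by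
  have : ∀ᶠ y in atBot, F y < u := by
    have := h0.eventually (eventually_lt_nhds hu)
    simpa using this
  obtain ⟨x0, hx0⟩ := this.exists
  refine ⟨x0, fun x hx => ?_⟩
  by_contra h
  push_neg at h
  exact absurd (le_trans hx (hmono h.le)) (not_le.mpr hx0)

lemma genInv_set_nonempty (h1 : Tendsto F atTop (nhds 1)) {u : ℝ} (hu : u < 1) :
    {x : ℝ | u ≤ F x}.Nonempty := by
  have : ∀ᶠ y in atTop, u < F y := h1.eventually (eventually_gt_nhds hu)
  obtain ⟨x, hx⟩ := this.exists
  exact ⟨x, hx.le⟩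

lemma le_F_genInv (hmono : Monotone F) (hrc : ∀ x : ℝ, ContinuousWithinAt F (Set.Ici x) x)
    (h0 : Tendsto F atBot (nhds 0)) (h1 : Tendsto F atTop (nhds 1)) {u : ℝ}
    (hu0 : 0 < u) (hu1 : u < 1) : u ≤ F (genInv F u) := by
  set a := genInv F u with ha
  by_contra h
  push_neg at h
  have hev : {x : ℝ | F x < u} ∈ nhdsWithin a (Set.Ici a) :=
    (hrc a).eventually (eventually_lt_nhds h)
  replace hev := mem_nhdsGE_iff_exists_Ico_subset.mp hev
  obtain ⟨b, hb, hsub⟩ := hev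
  have hlt : sInf {x : ℝ | u ≤ F x} < b := lt_of_eq_of_lt ha.symm hb
  obtain ⟨x, hxS, hxb⟩ := (csInf_lt_iff (genInv_bddBelow h0 hmono hu0)
    (genInv_set_nonempty h1 hu1)).mp hlt
  have hax : a ≤ x := csInf_le (genInv_bddBelow h0 hmono hu0) hxS
  have : F x < u := hsub ⟨hax, hxb⟩
  exact absurd hxS (not_le.mpr this)

lemma genInv_le (h0 : Tendsto F atBot (nhds 0)) (hmono : Monotone F) {u x0 : ℝ}
    (hu : 0 < u) (hx0 : u ≤ F x0) : genInv F u ≤ x0 :=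
  csInf_le (genInv_bddBelow h0 hmono hu) hx0

lemma le_genInv (h1 : Tendsto F atTop (nhds 1)) (hmono : Monotone F) {u x0 : ℝ}
    (hu : u < 1) (hx0 : F x0 < u) : x0 ≤ genInv F u := by
  refine le_csInf (genInv_set_nonempty h1 hu) (fun x hx => ?_)
  by_contra h
  push_neg at h
  exact absurd (le_trans hx (hmono h.le)) (not_le.mpr hx0)

lemma genInv_mono (h0 : Tendsto F atBot (nhds 0)) (h1 : Tendsto F atTop (nhds 1))
    (hmono : Monotone F) {u v : ℝ} (hu : 0 < u) (huv : u ≤ v) (hv : v < 1) :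
    genInv F u ≤ genInv F v :=
  csInf_le_csInf (genInv_bddBelow h0 hmono hu) (genInv_set_nonempty h1 hv)
    (fun x hx => le_trans huv hx)

lemma agg_tail_bounds (hν : 0 < ν) (hAGG : AGGTail F ν) (hle : ∀ x, F x ≤ 1) :
    ∃ C₀ : ℝ, 1 ≤ C₀ ∧ ∀ x ≥ C₀,
      F x < 1 ∧
      1 - F x ≤ Real.exp (-(3/4) * x ^ ν / ν) ∧
      Real.exp (-(5/4) * x ^ ν / ν) ≤ 1 - F x := by
  obtain ⟨C, hC⟩ := hAGG (1/4) (by norm_num)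
  refine ⟨max C 1, le_max_right _ _, fun x hx => ?_⟩
  have hxC : x ≥ C := le_trans (le_max_left _ _) hx
  have hx1 : (1:ℝ) ≤ x := le_trans (le_max_right _ _) hx
  obtain ⟨hlow, hup⟩ := hC x hxC
  have hxν : (1:ℝ) ≤ x ^ ν := Real.one_le_rpow hx1 hν.le
  have hupval : Real.log (1 - F x) ≤ -(3/4) * x ^ ν / ν := by
    calc Real.log (1 - F x) ≤ -(1 - 1/4) * x ^ ν / ν := hup
    _ = -(3/4) * x ^ ν / ν := by norm_num
  have hlowval : -(5/4) * x ^ ν / ν ≤ Real.log (1 - F x) := by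
    calc -(5/4) * x ^ ν / ν = -(1 + 1/4) * x ^ ν / ν := by norm_num
    _ ≤ Real.log (1 - F x) := hlow
  have hneg : -(3/4 * x ^ ν) / ν < 0 := by
    apply div_neg_of_neg_of_pos _ hν
    nlinarith
  have hpos : 0 < 1 - F x := by
    rcases lt_or_eq_of_le (hle x) with h | h
    · linarith
    · exfalso
      rw [h] at hupval
      simp [Real.log_zero] at hupval
      linarith
  refine ⟨by linarith, ?_, ?_⟩
  · calc 1 - F x = Real.exp (Real.log (1 - F x)) := (Real.exp_log hpos).symm
    _ ≤ Real.exp (-(3/4) * x ^ ν / ν) := Real.exp_le_exp.mpr hupval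
  · calc Real.exp (-(5/4) * x ^ ν / ν) ≤ Real.exp (Real.log (1 - F x)) :=
        Real.exp_le_exp.mpr hlowval
    _ = 1 - F x := Real.exp_log hpos

lemma F_lt_one (hν : 0 < ν) (hAGG : AGGTail F ν) (hmono : Monotone F)
    (hle : ∀ x, F x ≤ 1) (x : ℝ) : F x < 1 := by
  obtain ⟨C₀, hC₀1, hC₀⟩ := agg_tail_bounds hν hAGG hle
  have := (hC₀ (max x C₀) (le_max_right _ _)).1
  exact lt_of_le_of_lt (hmono (le_max_left _ _)) this

lemma tail_lintegral_lt_top (hν : 0 < ν) :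
    ∫⁻ t in Set.Ioi (0:ℝ), ENNReal.ofReal (Real.exp (-(3/8) * t ^ ν / ν)) < ⊤ := by
  set h : ℝ → ℝ := fun t => Real.exp (-(3/8) * t ^ ν / ν) with hh
  have key : ∀ᶠ t in atTop, h t ≤ t ^ (-2 : ℝ) := by
    have t1 : Tendsto (fun y : ℝ => y ^ (2/ν) * Real.exp (-(3/(8*ν)) * y)) atTop (nhds 0) :=
      tendsto_rpow_mul_exp_neg_mul_atTop_nhds_zero _ _ (by positivity)
    have t3 : Tendsto (fun t : ℝ => ((t ^ ν) ^ (2/ν)) * Real.exp (-(3/(8*ν)) * t ^ ν))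
        atTop (nhds 0) := t1.comp (tendsto_rpow_atTop hν)
    have t4 : ∀ᶠ t : ℝ in atTop, ((t ^ ν) ^ (2/ν)) * Real.exp (-(3/(8*ν)) * t ^ ν)
        = t ^ (2:ℝ) * h t := by
      filter_upwards [eventually_ge_atTop (0:ℝ)] with t ht
      rw [← Real.rpow_mul ht]
      congr 1
      · congr 1
        field_simp
      · rw [hh]
        congr 1
        ring
    have t5 : Tendsto (fun t : ℝ => t ^ (2:ℝ) * h t) atTop (nhds 0) :=
      Tendsto.congr' t4 t3
    have t6 : ∀ᶠ t : ℝ in atTop, t ^ (2:ℝ) * h t ≤ 1 :=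
      t5.eventually (eventually_le_nhds one_pos)
    filter_upwards [t6, eventually_ge_atTop (1:ℝ)] with t ht ht1
    have htpos : (0:ℝ) < t := lt_of_lt_of_le one_pos ht1
    have h2pos : (0:ℝ) < t ^ (2:ℝ) := Real.rpow_pos_of_pos htpos 2
    have : h t ≤ 1 / t ^ (2:ℝ) := (le_div_iff₀ h2pos).mpr (by linarith [mul_comm (h t) (t ^ (2:ℝ))])
    rwa [Real.rpow_neg htpos.le, ← one_div]
  obtain ⟨t₁, ht₁⟩ := (key.and (eventually_ge_atTop (1:ℝ))).exists_forall_of_atTop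
  have ht₁1 : (1:ℝ) ≤ t₁ := (ht₁ t₁ le_rfl).2
  have ht₁pos : (0:ℝ) < t₁ := lt_of_lt_of_le one_pos ht₁1
  have hsplit : Set.Ioi (0:ℝ) = Set.Ioc 0 t₁ ∪ Set.Ioi t₁ :=
    (Set.Ioc_union_Ioi_eq_Ioi ht₁pos.le).symm
  rw [hsplit]
  apply lt_of_le_of_lt (lintegral_union_le _ _ _)
  have part1 : ∫⁻ t in Set.Ioc (0:ℝ) t₁, ENNReal.ofReal (h t) < ⊤ := by
    have hb : ∀ t ∈ Set.Ioc (0:ℝ) t₁, ENNReal.ofReal (h t) ≤ 1 := by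
      intro t htmem
      rw [show (1:ℝ≥0∞) = ENNReal.ofReal 1 by simp]
      apply ENNReal.ofReal_le_ofReal
      rw [hh]
      apply Real.exp_le_one_iff.mpr
      have : (0:ℝ) ≤ t ^ ν := Real.rpow_nonneg htmem.1.le ν
      have : -(3/8) * t ^ ν / ν ≤ 0 := by
        apply div_nonpos_of_nonpos_of_nonneg _ hν.le
        nlinarith
      linarith
    calc ∫⁻ t in Set.Ioc (0:ℝ) t₁, ENNReal.ofReal (h t)
        ≤ ∫⁻ t in Set.Ioc (0:ℝ) t₁, (1:ℝ≥0∞) := setLIntegral_mono measurable_const hb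
      _ = volume (Set.Ioc (0:ℝ) t₁) := by rw [setLIntegral_const, one_mul]
      _ < ⊤ := measure_Ioc_lt_top
  have part2 : ∫⁻ t in Set.Ioi t₁, ENNReal.ofReal (h t) < ⊤ := by
    have hint : IntegrableOn (fun x : ℝ => x ^ (-2:ℝ)) (Set.Ioi t₁) :=
      integrableOn_Ioi_rpow_of_lt (by norm_num) ht₁pos
    have hfin : ∫⁻ t in Set.Ioi t₁, ENNReal.ofReal (t ^ (-2:ℝ)) < ⊤ := by
      refine lt_of_le_of_lt (lintegral_mono (fun t => Real.ofReal_le_enorm _)) ?_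
      exact hint.2
    refine lt_of_le_of_lt (setLIntegral_mono (by fun_prop) (fun t ht => ?_)) hfin
    exact ENNReal.ofReal_le_ofReal ((ht₁ t (le_of_lt ht)).1)
  exact ENNReal.add_lt_top.mpr ⟨part1, part2⟩

lemma integral_pos_part_eq {Ω : Type} [MeasurableSpace Ω] (μ : Measure Ω)
    [IsProbabilityMeasure μ] (f : Ω → ℝ) (hf : Measurable f) (A : ℝ) :
    ∫ ω, max (f ω - A) 0 ∂μ
      = (∫⁻ t in Set.Ioi (0:ℝ), μ {ω | t < max (f ω - A) 0}).toReal := by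
  have hg : Measurable (fun ω => max (f ω - A) 0) := (hf.sub_const A).max measurable_const
  have h1 := integral_eq_lintegral_of_nonneg_ae (μ := μ) (f := fun ω => max (f ω - A) 0)
    (Eventually.of_forall (fun ω => le_max_right _ _)) hg.aestronglyMeasurable
  rw [h1]
  congr 1
  exact lintegral_eq_lintegral_meas_lt μ (Eventually.of_forall (fun ω => le_max_right _ _))
    hg.aemeasurable

lemma union_bound {Ω : Type} [MeasurableSpace Ω] (μ : Measure Ω)
    [IsProbabilityMeasure μ] {n : ℕ} (hn : 0 < n) (ε : Fin n → Ω → ℝ)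
    (hmeas : ∀ j, Measurable (ε j)) (F : ℝ → ℝ) (hF0 : ∀ x, 0 ≤ F x)
    (hmarg : ∀ j (x : ℝ), μ {ω | ε j ω ≤ x} = ENNReal.ofReal (F x)) (x : ℝ) :
    μ {ω | x < ⨆ j, ε j ω} ≤ (n : ℝ≥0∞) * ENNReal.ofReal (1 - F x) := by
  have : Nonempty (Fin n) := ⟨⟨0, hn⟩⟩
  have hsub : {ω | x < ⨆ j, ε j ω} ⊆ ⋃ j, {ω | x < ε j ω} := by
    intro ω hω
    by_contra h
    simp only [Set.mem_iUnion, Set.mem_setOf_eq, not_exists, not_lt] at h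
    exact absurd (ciSup_le h) (not_le.mpr hω)
  have hsingle : ∀ j, μ {ω | x < ε j ω} = ENNReal.ofReal (1 - F x) := by
    intro j
    have hc : {ω | x < ε j ω} = {ω | ε j ω ≤ x}ᶜ := by
      ext ω; simp [not_le]
    have hms : MeasurableSet {ω | ε j ω ≤ x} := (hmeas j) measurableSet_Iic
    rw [hc, measure_compl hms (measure_ne_top μ _), hmarg j x, measure_univ]
    have hle : ENNReal.ofReal (F x) ≤ 1 := by
      rw [← hmarg j x]; exact prob_le_one
    rw [← ENNReal.ofReal_one, ← ENNReal.ofReal_sub _ (hF0 x)]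
  calc μ {ω | x < ⨆ j, ε j ω} ≤ μ (⋃ j, {ω | x < ε j ω}) := measure_mono hsub
    _ ≤ ∑ j : Fin n, μ {ω | x < ε j ω} := measure_iUnion_fintype_le _ _
    _ = (n : ℝ≥0∞) * ENNReal.ofReal (1 - F x) := by
      simp [hsingle, Finset.sum_const, Finset.card_univ]

end helpers

set_option maxHeartbeats 2000000 in
theorem AGG_max_upper_excess_vanishes_in_expectation
    (F : ℝ → ℝ) (hmono : Monotone F)
    (hrc : ∀ x : ℝ, ContinuousWithinAt F (Set.Ici x) x)
    (h0 : Tendsto F atBot (nhds 0)) (h1 : Tendsto F atTop (nhds 1))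
    (ν : ℝ) (hν : 0 < ν) (hAGG : AGGTail F ν)
    (Ω : ℕ → Type) (mΩ : ∀ p, MeasurableSpace (Ω p))
    (μ : ∀ p, Measure (Ω p)) (hprob : ∀ p, IsProbabilityMeasure (μ p))
    (ε : ∀ p : ℕ, Fin p → Ω p → ℝ)
    (hmeas : ∀ p j, Measurable (ε p j))
    (hmarg : ∀ p j (x : ℝ), μ p {ω | ε p j ω ≤ x} = ENNReal.ofReal (F x)) :
    Tendsto (fun p : ℕ =>
        ∫ ω, max ((⨆ j, ε p j ω) / quantileSeq F p
            - (1 + (quantileSeq F (p * Real.log p) / quantileSeq F p - 1))) 0 ∂(μ p))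
      atTop (nhds 0) := by
  classical
  have hF0 : ∀ x, 0 ≤ F x := F_nonneg hmono h0
  have hF1 : ∀ x, F x ≤ 1 := F_le_one hmono h1
  obtain ⟨C₀, hC₀1, hC₀⟩ := agg_tail_bounds hν hAGG hF1
  have hFlt1 : ∀ x, F x < 1 := F_lt_one hν hAGG hmono hF1
  set K' := ∫⁻ t in Set.Ioi (0:ℝ), ENNReal.ofReal (Real.exp (-(3/8) * t ^ ν / ν)) with hK'def
  have hK'fin : K' < ⊤ := tail_lintegral_lt_top hν
  set K := K'.toReal with hKdef
  have hKnn : 0 ≤ K := ENNReal.toReal_nonneg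
  set b : ℕ → ℝ := fun p => (C₀ + (12 * ν * Real.log p) ^ (1/ν)) /
      ((4/5 * ν * Real.log p) ^ (1/ν) * Real.log p) + K * (p:ℝ) ^ (-(7/5):ℝ) with hbdef
  -- limit of the bound sequence
  have hlog : Tendsto (fun p : ℕ => Real.log p) atTop atTop :=
    Real.tendsto_log_atTop.comp tendsto_natCast_atTop_atTop
  have hb0 : Tendsto b atTop (nhds 0) := by
    have hterm2 : Tendsto (fun p : ℕ => K * (p:ℝ) ^ (-(7/5):ℝ)) atTop (nhds 0) := by
      have h2 : Tendsto (fun x : ℝ => x ^ (-(7/5):ℝ)) atTop (nhds 0) := by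
        have := tendsto_rpow_neg_atTop (by norm_num : (0:ℝ) < 7/5)
        simpa using this
      have := (h2.comp tendsto_natCast_atTop_atTop).const_mul K
      simpa using this
    have hYL : Tendsto (fun p : ℕ => (4/5 * ν * Real.log p) ^ (1/ν) * Real.log p)
        atTop atTop := by
      have hY : Tendsto (fun p : ℕ => (4/5 * ν * Real.log p) ^ (1/ν)) atTop atTop := by
        apply (tendsto_rpow_atTop (by positivity : (0:ℝ) < 1/ν)).comp
        apply Tendsto.const_mul_atTop (by positivity : (0:ℝ) < 4/5 * ν)
        exact hlog
      exact hY.atTop_mul_atTop₀ hlog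
    have hterm1 : Tendsto (fun p : ℕ => (C₀ + (12 * ν * Real.log p) ^ (1/ν)) /
        ((4/5 * ν * Real.log p) ^ (1/ν) * Real.log p)) atTop (nhds 0) := by
      have ha : Tendsto (fun p : ℕ => C₀ / ((4/5 * ν * Real.log p) ^ (1/ν) * Real.log p))
          atTop (nhds 0) := tendsto_const_nhds.div_atTop hYL
      have hb' : Tendsto (fun p : ℕ => (15:ℝ) ^ (1/ν) / Real.log p) atTop (nhds 0) :=
        tendsto_const_nhds.div_atTop hlog
      have hsum := ha.add hb'
      rw [add_zero] at hsum
      apply Tendsto.congr' _ hsum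
      filter_upwards [hlog.eventually_gt_atTop 0] with p hL
      have hν' : ν ≠ 0 := ne_of_gt hν
      have hX0 : (0:ℝ) ≤ 12 * ν * Real.log p := by positivity
      have hY0 : (0:ℝ) < 4/5 * ν * Real.log p := by positivity
      have hratio : (12 * ν * Real.log p) ^ (1/ν) / (4/5 * ν * Real.log p) ^ (1/ν)
          = (15:ℝ) ^ (1/ν) := by
        rw [← Real.div_rpow hX0 hY0.le]
        congr 1
        field_simp
        ring
      rw [add_div]
      congr 1
      rw [← div_div, hratio]
    have := hterm1.add hterm2
    rw [add_zero] at this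
    exact this

  refine squeeze_zero' ?_ ?_ hb0
  · exact Eventually.of_forall (fun p => integral_nonneg (fun ω => le_max_right _ _))
  · have hδ : 0 < 1 - F C₀ := by linarith [hFlt1 C₀]
    set δ := 1 - F C₀ with hδdef
    have hqp : ∀ q : ℝ, 1 < q → 1/q < δ →
        C₀ ≤ genInv F (1 - 1/q) ∧ 1 - 1/q ≤ F (genInv F (1 - 1/q)) := by
      intro q hq hqδ
      have hq0 : 0 < q := lt_trans one_pos hq
      have hu0 : 0 < 1 - 1/q := by
        have : 1/q < 1 := by rw [div_lt_one hq0]; linarith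
        linarith
      have hu1 : 1 - 1/q < 1 := by
        have : 0 < 1/q := by positivity
        linarith
      refine ⟨le_genInv h1 hmono hu1 ?_, le_F_genInv hmono hrc h0 h1 hu0 hu1⟩
      rw [hδdef] at hqδ
      linarith
    have hcast : Tendsto (fun p : ℕ => (p:ℝ)) atTop atTop := tendsto_natCast_atTop_atTop
    have hpL : Tendsto (fun p : ℕ => (p:ℝ) * Real.log p) atTop atTop :=
      hcast.atTop_mul_atTop₀ hlog
    have hp8 : Tendsto (fun p : ℕ => (p:ℝ) ^ (8:ℝ)) atTop atTop :=
      (tendsto_rpow_atTop (by norm_num : (0:ℝ) < 8)).comp hcast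
    filter_upwards [hcast.eventually_ge_atTop 3, hlog.eventually_ge_atTop 1,
      hcast.eventually_gt_atTop (1/δ), hpL.eventually_gt_atTop (1/δ),
      hp8.eventually_gt_atTop (1/δ)] with p hp3 hL1 hd1 hd2 hd3
    set L := Real.log p with hLdef
    have hp0 : (0:ℝ) < p := by linarith
    have hL0 : (0:ℝ) < L := by linarith
    have hpn : 0 < p := by exact_mod_cast lt_of_lt_of_le (by norm_num : (0:ℝ) < 3) hp3
    have hδ1 : 1/(p:ℝ) < δ := by
      rw [div_lt_iff₀ hp0]
      have := (div_lt_iff₀ hδ).mp hd1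
      linarith [mul_comm δ (p:ℝ)]
    have hpL0 : (0:ℝ) < (p:ℝ) * L := by positivity
    have hδ2 : 1/((p:ℝ) * L) < δ := by
      rw [div_lt_iff₀ hpL0]
      have := (div_lt_iff₀ hδ).mp hd2
      linarith [mul_comm δ ((p:ℝ) * L)]
    have hp80 : (0:ℝ) < (p:ℝ) ^ (8:ℝ) := Real.rpow_pos_of_pos hp0 8
    have hδ3 : 1/((p:ℝ) ^ (8:ℝ)) < δ := by
      rw [div_lt_iff₀ hp80]
      have := (div_lt_iff₀ hδ).mp hd3
      linarith [mul_comm δ ((p:ℝ) ^ (8:ℝ))]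
    have hp1 : (1:ℝ) < p := by linarith
    have hpL1 : (1:ℝ) < (p:ℝ) * L := by nlinarith
    have hp81 : (1:ℝ) < (p:ℝ) ^ (8:ℝ) := by
      calc (1:ℝ) = (p:ℝ) ^ (0:ℝ) := (Real.rpow_zero _).symm
      _ < (p:ℝ) ^ (8:ℝ) := Real.rpow_lt_rpow_left_iff hp1 |>.mpr (by norm_num)
    -- quantiles
    set up := quantileSeq F (p:ℝ) with hupdef
    set A := quantileSeq F ((p:ℝ) * Real.log p) with hAdef
    set B := genInv F (1 - 1/((p:ℝ) ^ (8:ℝ))) with hBdef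
    obtain ⟨hupC, hupF⟩ := hqp (p:ℝ) hp1 hδ1
    obtain ⟨hAC, hAF⟩ := hqp ((p:ℝ) * L) hpL1 hδ2
    obtain ⟨hBC, hBF⟩ := hqp ((p:ℝ) ^ (8:ℝ)) hp81 hδ3
    rw [show genInv F (1 - 1/(p:ℝ)) = up from rfl] at hupC hupF
    rw [show genInv F (1 - 1/((p:ℝ) * L)) = A from rfl] at hAC hAF
    rw [show genInv F (1 - 1/((p:ℝ) ^ (8:ℝ))) = B from rfl] at hBC hBF
    have hup1 : (1:ℝ) ≤ up := le_trans hC₀1 hupC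
    have hup0 : (0:ℝ) < up := by linarith
    have hA1 : (1:ℝ) ≤ A := le_trans hC₀1 hAC
    have hB1 : (1:ℝ) ≤ B := le_trans hC₀1 hBC
    -- A ≤ B
    have hAB : A ≤ B := by
      apply genInv_mono h0 h1 hmono
      · have : 1/((p:ℝ)*L) < 1 := by rw [div_lt_one hpL0]; linarith
        linarith
      · have hlp : L ≤ (p:ℝ) := le_trans (Real.log_le_sub_one_of_pos hp0) (by linarith)
        have hp2 : (p:ℝ) * (p:ℝ) ≤ (p:ℝ) ^ (8:ℝ) := by
          have heq : (p:ℝ) * (p:ℝ) = (p:ℝ) ^ (2:ℝ) := by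
            rw [show (2:ℝ) = ((2:ℕ):ℝ) by norm_num, Real.rpow_natCast]; ring
          rw [heq]
          exact Real.rpow_le_rpow_left_iff hp1 |>.mpr (by norm_num)
        have hmul : (p:ℝ) * L ≤ (p:ℝ) ^ (8:ℝ) := by nlinarith
        have := one_div_le_one_div_of_le hpL0 hmul
        linarith
      · have : 0 < 1/((p:ℝ) ^ (8:ℝ)) := by positivity
        linarith
    -- tail bounds
    have hFup : 1 - F up ≤ 1/(p:ℝ) := by linarith
    have hFA : 1 - F A ≤ 1/((p:ℝ) * L) := by linarith
    have hFB : 1 - F B ≤ 1/((p:ℝ) ^ (8:ℝ)) := by linarith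
    -- lower bound on up
    have hupY : (4/5 * ν * L) ^ (1/ν) ≤ up := by
      have hlow := (hC₀ up hupC).2.2
      have hexp : Real.exp (-(5/4) * up ^ ν / ν) ≤ Real.exp (-L) := by
        calc Real.exp (-(5/4) * up ^ ν / ν) ≤ 1/(p:ℝ) := le_trans hlow hFup
        _ = Real.exp (-L) := by
          rw [hLdef, ← Real.log_inv, Real.exp_log (by positivity), one_div]
      have hle := Real.exp_le_exp.mp hexp
      have hups : 4/5 * ν * L ≤ up ^ ν := by
        rw [div_le_iff₀ hν] at hle
        · nlinarith
      calc (4/5 * ν * L) ^ (1/ν) ≤ (up ^ ν) ^ (1/ν) :=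
          Real.rpow_le_rpow (by positivity) hups (by positivity)
      _ = up := by
        rw [← Real.rpow_mul (by linarith), mul_one_div, div_self (ne_of_gt hν),
          Real.rpow_one]
    -- upper bound on B
    have hp8exp : 1/((p:ℝ) ^ (8:ℝ)) = Real.exp (-(8 * L)) := by
      rw [Real.rpow_def_of_pos hp0, one_div, ← Real.exp_neg, hLdef]
      ring_nf
    have hBub : B ≤ max C₀ ((12 * ν * L) ^ (1/ν)) := by
      set R := max C₀ ((12 * ν * L) ^ (1/ν)) with hRdef
      have hRC : C₀ ≤ R := le_max_left _ _
      have hX0 : (0:ℝ) ≤ (12 * ν * L) ^ (1/ν) := Real.rpow_nonneg (by positivity) _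
      have hRX : (12 * ν * L) ^ (1/ν) ≤ R := le_max_right _ _
      have hRν : 12 * ν * L ≤ R ^ ν := by
        calc 12 * ν * L = ((12 * ν * L) ^ (1/ν)) ^ ν := by
              rw [← Real.rpow_mul (by positivity), one_div, inv_mul_cancel₀ (ne_of_gt hν),
                Real.rpow_one]
          _ ≤ R ^ ν := Real.rpow_le_rpow hX0 hRX hν.le
      have hFR : 1 - F R ≤ 1/((p:ℝ) ^ (8:ℝ)) := by
        calc 1 - F R ≤ Real.exp (-(3/4) * R ^ ν / ν) := (hC₀ R hRC).2.1
        _ ≤ Real.exp (-(8 * L)) := by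
          apply Real.exp_le_exp.mpr
          rw [div_le_iff₀ hν]
          nlinarith
        _ = 1/((p:ℝ) ^ (8:ℝ)) := hp8exp.symm
      apply genInv_le h0 hmono
      · have : 1/((p:ℝ) ^ (8:ℝ)) < 1 := by rw [div_lt_one hp80]; linarith
        linarith
      · linarith
    -- exp bound at B
    have hBexp : Real.exp (-(3/8) * B ^ ν / ν) ≤ (p:ℝ) ^ (-(12/5):ℝ) := by
      have hlowB := (hC₀ B hBC).2.2
      have h1' : Real.exp (-(5/4) * B ^ ν / ν) ≤ Real.exp (-(8 * L)) := by
        rw [← hp8exp]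
        exact le_trans hlowB hFB
      have h2' := Real.exp_le_exp.mp h1'
      have hBs : 8 * L * (4/5) * ν ≤ B ^ ν := by
        rw [div_le_iff₀ hν] at h2'
        · nlinarith
      have : -(3/8) * B ^ ν / ν ≤ -(12/5 * L) := by
        rw [div_le_iff₀ hν]
        nlinarith
      calc Real.exp (-(3/8) * B ^ ν / ν) ≤ Real.exp (-(12/5 * L)) := Real.exp_le_exp.mpr this
      _ = (p:ℝ) ^ (-(12/5):ℝ) := by
        rw [Real.rpow_def_of_pos hp0, hLdef]
        ring_nf
    -- the integral bound
    haveI := hprob p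
    set f : Ω p → ℝ := fun ω => ⨆ j, ε p j ω with hfdef
    have hf : Measurable f := Measurable.iSup (fun j => hmeas p j)
    have hrw : ∀ ω, max (f ω / up - (1 + (A / up - 1))) 0 = max (f ω - A) 0 / up := by
      intro ω
      rw [← max_div_div_right hup0.le (f ω - A) (0:ℝ), zero_div]
      congr 1
      field_simp
      ring
    set S := ∫⁻ t in Set.Ioi (0:ℝ), μ p {ω | t < max (f ω - A) 0} with hSdef
    have heq : ∫ ω, max (f ω - A) 0 ∂μ p = S.toReal := integral_pos_part_eq (μ p) f hf A
    set X12 := (12 * ν * L) ^ (1/ν) with hX12def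
    set Y := (4/5 * ν * L) ^ (1/ν) with hYdef
    set T := B - A with hTdef
    have hT0 : 0 ≤ T := by rw [hTdef]; linarith
    have hSle : S ≤ ENNReal.ofReal (1/L) * ENNReal.ofReal T
        + ENNReal.ofReal ((p:ℝ) ^ (-(7/5):ℝ)) * K' := by
      have hΦmeas : Measurable (fun t : ℝ => (p:ℝ≥0∞) * ENNReal.ofReal (1 - F (A + t))) := by
        apply Measurable.const_mul
        apply ENNReal.measurable_ofReal.comp
        have hanti : Antitone (fun t : ℝ => 1 - F (A + t)) := by
          intro s t hst
          simp only
          have := hmono (by linarith : A + s ≤ A + t)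
          linarith
        exact hanti.measurable
      have step1 : S ≤ ∫⁻ t in Set.Ioi (0:ℝ), (p:ℝ≥0∞) * ENNReal.ofReal (1 - F (A + t)) := by
        rw [hSdef]
        apply setLIntegral_mono hΦmeas
        intro t ht
        have ht0 : (0:ℝ) < t := ht
        have hset : {ω | t < max (f ω - A) 0} = {ω | (A + t) < f ω} := by
          ext ω
          simp only [Set.mem_setOf_eq, lt_max_iff]
          constructor
          · rintro (h | h)
            · linarith
            · linarith
          · intro h; left; linarith
        rw [hset]
        exact union_bound (μ p) hpn (ε p) (hmeas p) F hF0 (hmarg p) (A + t)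
      have hsplit : Set.Ioi (0:ℝ) = Set.Ioc 0 T ∪ Set.Ioi T :=
        (Set.Ioc_union_Ioi_eq_Ioi hT0).symm
      have step2 : ∫⁻ t in Set.Ioi (0:ℝ), (p:ℝ≥0∞) * ENNReal.ofReal (1 - F (A + t))
          ≤ (∫⁻ t in Set.Ioc (0:ℝ) T, (p:ℝ≥0∞) * ENNReal.ofReal (1 - F (A + t)))
            + ∫⁻ t in Set.Ioi T, (p:ℝ≥0∞) * ENNReal.ofReal (1 - F (A + t)) := by
        rw [hsplit]
        exact lintegral_union_le _ _ _
      have hofnat : (p:ℝ≥0∞) = ENNReal.ofReal (p:ℝ) := by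
        rw [ENNReal.ofReal_natCast]
      have part1 : ∫⁻ t in Set.Ioc (0:ℝ) T, (p:ℝ≥0∞) * ENNReal.ofReal (1 - F (A + t))
          ≤ ENNReal.ofReal (1/L) * ENNReal.ofReal T := by
        have hb1 : ∀ t ∈ Set.Ioc (0:ℝ) T, (p:ℝ≥0∞) * ENNReal.ofReal (1 - F (A + t))
            ≤ ENNReal.ofReal (1/L) := by
          intro t ht
          have hFAt : F A ≤ F (A + t) := hmono (by linarith [ht.1] : A ≤ A + t)
          calc (p:ℝ≥0∞) * ENNReal.ofReal (1 - F (A + t))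
              ≤ (p:ℝ≥0∞) * ENNReal.ofReal (1/((p:ℝ) * L)) :=
                mul_le_mul_right (ENNReal.ofReal_le_ofReal (by linarith)) _
            _ = ENNReal.ofReal ((p:ℝ) * (1/((p:ℝ) * L))) := by
                rw [hofnat, ← ENNReal.ofReal_mul (by positivity)]
            _ = ENNReal.ofReal (1/L) := by
                congr 1
                field_simp
        calc ∫⁻ t in Set.Ioc (0:ℝ) T, (p:ℝ≥0∞) * ENNReal.ofReal (1 - F (A + t))
            ≤ ∫⁻ _ in Set.Ioc (0:ℝ) T, ENNReal.ofReal (1/L) :=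
              setLIntegral_mono measurable_const hb1
          _ = ENNReal.ofReal (1/L) * volume (Set.Ioc (0:ℝ) T) := setLIntegral_const _ _
          _ = ENNReal.ofReal (1/L) * ENNReal.ofReal T := by
              rw [Real.volume_Ioc, sub_zero]
      have hexpmeas : Measurable (fun t : ℝ => ENNReal.ofReal (Real.exp (-(3/8) * t ^ ν / ν))) := by
        fun_prop
      have part2 : ∫⁻ t in Set.Ioi T, (p:ℝ≥0∞) * ENNReal.ofReal (1 - F (A + t))
          ≤ ENNReal.ofReal ((p:ℝ) ^ (-(7/5):ℝ)) * K' := by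
        have hb2 : ∀ t ∈ Set.Ioi T, (p:ℝ≥0∞) * ENNReal.ofReal (1 - F (A + t))
            ≤ ENNReal.ofReal ((p:ℝ) ^ (-(7/5):ℝ))
              * ENNReal.ofReal (Real.exp (-(3/8) * t ^ ν / ν)) := by
          intro t ht
          have htT : T < t := ht
          have ht0 : (0:ℝ) < t := lt_of_le_of_lt hT0 htT
          have hAtB : B ≤ A + t := by rw [hTdef] at htT; linarith
          have hAtC : C₀ ≤ A + t := le_trans hBC hAtB
          have h1' : 1 - F (A + t) ≤ Real.exp (-(3/4) * (A + t) ^ ν / ν) := (hC₀ _ hAtC).2.1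
          have hmax1 : B ^ ν ≤ (A + t) ^ ν := Real.rpow_le_rpow (by linarith) hAtB hν.le
          have hmax2 : t ^ ν ≤ (A + t) ^ ν := Real.rpow_le_rpow ht0.le (by linarith) hν.le
          have hkey : -(3/4) * (A + t) ^ ν / ν ≤ -(3/8) * B ^ ν / ν + -(3/8) * t ^ ν / ν := by
            rw [← add_div]
            have hnum : -(3/4) * (A + t) ^ ν ≤ -(3/8) * B ^ ν + -(3/8) * t ^ ν := by linarith
            exact (div_le_div_iff_of_pos_right hν).mpr hnum
          have h2' : 1 - F (A + t) ≤ (p:ℝ) ^ (-(12/5):ℝ) * Real.exp (-(3/8) * t ^ ν / ν) := by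
            calc 1 - F (A + t) ≤ Real.exp (-(3/4) * (A + t) ^ ν / ν) := h1'
              _ ≤ Real.exp (-(3/8) * B ^ ν / ν + -(3/8) * t ^ ν / ν) := Real.exp_le_exp.mpr hkey
              _ = Real.exp (-(3/8) * B ^ ν / ν) * Real.exp (-(3/8) * t ^ ν / ν) := Real.exp_add _ _
              _ ≤ (p:ℝ) ^ (-(12/5):ℝ) * Real.exp (-(3/8) * t ^ ν / ν) :=
                mul_le_mul_of_nonneg_right hBexp (Real.exp_nonneg _)
          have hpp : (p:ℝ) * (p:ℝ) ^ (-(12/5):ℝ) = (p:ℝ) ^ (-(7/5):ℝ) := by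
            have hadd := Real.rpow_add hp0 1 (-(12/5):ℝ)
            rw [Real.rpow_one] at hadd
            rw [← hadd]
            norm_num
          calc (p:ℝ≥0∞) * ENNReal.ofReal (1 - F (A + t))
              ≤ (p:ℝ≥0∞) * ENNReal.ofReal ((p:ℝ) ^ (-(12/5):ℝ)
                  * Real.exp (-(3/8) * t ^ ν / ν)) :=
                mul_le_mul_right (ENNReal.ofReal_le_ofReal h2') _
            _ = ENNReal.ofReal ((p:ℝ) * ((p:ℝ) ^ (-(12/5):ℝ)
                  * Real.exp (-(3/8) * t ^ ν / ν))) := by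
                rw [hofnat, ← ENNReal.ofReal_mul (by positivity)]
            _ = ENNReal.ofReal ((p:ℝ) ^ (-(7/5):ℝ) * Real.exp (-(3/8) * t ^ ν / ν)) := by
                rw [← mul_assoc, hpp]
            _ = ENNReal.ofReal ((p:ℝ) ^ (-(7/5):ℝ))
                  * ENNReal.ofReal (Real.exp (-(3/8) * t ^ ν / ν)) :=
                ENNReal.ofReal_mul (by positivity)
        calc ∫⁻ t in Set.Ioi T, (p:ℝ≥0∞) * ENNReal.ofReal (1 - F (A + t))
            ≤ ∫⁻ t in Set.Ioi T, ENNReal.ofReal ((p:ℝ) ^ (-(7/5):ℝ))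
                * ENNReal.ofReal (Real.exp (-(3/8) * t ^ ν / ν)) :=
              setLIntegral_mono (hexpmeas.const_mul _) hb2
          _ ≤ ∫⁻ t in Set.Ioi (0:ℝ), ENNReal.ofReal ((p:ℝ) ^ (-(7/5):ℝ))
                * ENNReal.ofReal (Real.exp (-(3/8) * t ^ ν / ν)) :=
              lintegral_mono_set (Set.Ioi_subset_Ioi hT0)
          _ = ENNReal.ofReal ((p:ℝ) ^ (-(7/5):ℝ)) * K' := by
              rw [hK'def, ← lintegral_const_mul _ hexpmeas]
      exact le_trans step1 (le_trans step2 (add_le_add part1 part2))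
    have hRHS1ne : ENNReal.ofReal (1/L) * ENNReal.ofReal T ≠ ⊤ :=
      ENNReal.mul_ne_top ENNReal.ofReal_ne_top ENNReal.ofReal_ne_top
    have hRHS2ne : ENNReal.ofReal ((p:ℝ) ^ (-(7/5):ℝ)) * K' ≠ ⊤ :=
      ENNReal.mul_ne_top ENNReal.ofReal_ne_top hK'fin.ne
    have hint_le : ∫ ω, max (f ω - A) 0 ∂μ p ≤ 1/L * T + (p:ℝ) ^ (-(7/5):ℝ) * K := by
      rw [heq]
      calc S.toReal ≤ (ENNReal.ofReal (1/L) * ENNReal.ofReal T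
          + ENNReal.ofReal ((p:ℝ) ^ (-(7/5):ℝ)) * K').toReal :=
            ENNReal.toReal_mono (ENNReal.add_ne_top.mpr ⟨hRHS1ne, hRHS2ne⟩) hSle
        _ = 1/L * T + (p:ℝ) ^ (-(7/5):ℝ) * K := by
            rw [ENNReal.toReal_add hRHS1ne hRHS2ne, ENNReal.toReal_mul, ENNReal.toReal_mul,
              ENNReal.toReal_ofReal (by positivity), ENNReal.toReal_ofReal hT0,
              ENNReal.toReal_ofReal (by positivity), hKdef]
    -- numeric conclusion
    have hY0 : (0:ℝ) < Y := Real.rpow_pos_of_pos (by positivity) _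
    have hX0' : (0:ℝ) ≤ X12 := Real.rpow_nonneg (by positivity) _
    have hT_le : T ≤ C₀ + X12 := by
      have hmx : max C₀ X12 ≤ C₀ + X12 := max_le (by linarith) (by linarith)
      rw [hTdef]
      linarith
    have h1t : 1/L * T / up ≤ (C₀ + X12) / (Y * L) := by
      have heq2 : 1/L * T / up = T / (L * up) := by
        field_simp
      rw [heq2]
      apply div_le_div₀ (by positivity) hT_le (by positivity)
      calc Y * L ≤ up * L := mul_le_mul_of_nonneg_right hupY hL0.le
        _ = L * up := mul_comm _ _
    have h2t : (p:ℝ) ^ (-(7/5):ℝ) * K / up ≤ K * (p:ℝ) ^ (-(7/5):ℝ) := by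
      rw [mul_comm]
      exact div_le_self (by positivity) hup1
    have hgoal : (∫ ω, max (f ω - A) 0 ∂μ p) / up ≤ b p := by
      calc (∫ ω, max (f ω - A) 0 ∂μ p) / up
          ≤ (1/L * T + (p:ℝ) ^ (-(7/5):ℝ) * K) / up := by
            gcongr
        _ = 1/L * T / up + (p:ℝ) ^ (-(7/5):ℝ) * K / up := add_div _ _ _
        _ ≤ (C₀ + X12) / (Y * L) + K * (p:ℝ) ^ (-(7/5):ℝ) := add_le_add h1t h2t
        _ = b p := by
            rw [hbdef]
    calc ∫ ω, max ((⨆ j, ε p j ω) / up - (1 + (A / up - 1))) 0 ∂μ p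
        = ∫ ω, max (f ω - A) 0 / up ∂μ p :=
          integral_congr_ae (Eventually.of_forall (fun ω => hrw ω))
      _ = (∫ ω, max (f ω - A) 0 ∂μ p) / up := integral_div up _
      _ ≤ b p := hgoal
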